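/- arXiv:1802.06294 — 2 statements merged into one kernel-verified Lean document; each statement's English description precedes it below -/
import Mathlib

section
/- Trapping argument: Let β, κ > 0 and let L, r : [t₀,∞) → ℝ be C¹ with L increasing, L(t) → ∞, and r'(t) = κ e^{-L(t)/2} r(t) + g(t) where |g(t)| ≤ K e^{-(1+β)L(t)} for some K > 0. If moreover r(t) → 0 as t → ∞, then there exists C > 0 and t₁ ≥ t₀ such that |r(t)| ≤ C e^{-(1/2+β)L(t)} for all t ≥ t₁. -/
/-!
Take `C = K / κ`. If `r s > C e^{-(1/2+β) L s}` at some `s`, then at every later time where `r`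
returns to the value `r s` we still have `r > C e^{-(1/2+β) L}` (the barrier decreases because `L`
increases), and there `κ e^{-L/2} r` beats the error `K e^{-(1+β) L}`, so `r' > 0`. Hence `r` never
drops below `r s > 0`, contradicting `r → 0`. Applying this to `-r` bounds `r` from below.
-/

open Filter Set Real

theorem le_of_deriv_pos_of_eq {r : ℝ → ℝ} {s : ℝ}
    (hr : ∀ t, s ≤ t → DifferentiableAt ℝ r t)
    (hpos : ∀ t, s ≤ t → r t = r s → 0 < deriv r t) {t : ℝ} (ht : s ≤ t) : r s ≤ r t :=
  image_le_of_deriv_right_lt_deriv_boundary' (f := fun _ => r s) (f' := fun _ => 0)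
    continuousOn_const (fun _ _ => hasDerivWithinAt_const _ _ _) le_rfl
    (fun x hx => (hr x hx.1).continuousAt.continuousWithinAt)
    (fun x hx => (hr x hx.1).hasDerivAt.hasDerivWithinAt)
    (fun x hx hx_eq => hpos x hx.1 hx_eq.symm) ⟨ht, le_rfl⟩

theorem exp_neg_half_mul_exp_neg (β x : ℝ) :
    exp (-x / 2) * exp (-((1 / 2 + β) * x)) = exp (-((1 + β) * x)) := by
  rw [← exp_add]
  ring_nf

theorem le_of_deriv_ge_of_tendsto_zero {β κ K t₀ : ℝ} {L r : ℝ → ℝ}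
    (hβ : 0 ≤ 1 / 2 + β) (hκ : 0 < κ) (hK : 0 ≤ K)
    (hrdiff : ∀ t, t₀ ≤ t → DifferentiableAt ℝ r t)
    (hLmono : MonotoneOn L (Ici t₀))
    (hr' : ∀ t, t₀ ≤ t →
      κ * exp (-(L t) / 2) * r t - K * exp (-((1 + β) * L t)) ≤ deriv r t)
    (hrlim : Tendsto r atTop (nhds 0)) :
    ∀ s, t₀ ≤ s → r s ≤ K / κ * exp (-((1 / 2 + β) * L s)) := by
  intro s hs
  by_contra! hrs
  set M : ℝ → ℝ := fun t => K / κ * exp (-((1 / 2 + β) * L t)) with hM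
  have hM_anti : ∀ t, s ≤ t → M t ≤ M s := fun t ht => by
    have hL : L s ≤ L t := hLmono hs (hs.trans ht) ht
    simp only [hM]
    gcongr
  have hdrift : ∀ u, κ * exp (-(L u) / 2) * M u = K * exp (-((1 + β) * L u)) := fun u => by
    rw [hM, ← exp_neg_half_mul_exp_neg β (L u)]
    field_simp
  have hderiv_pos : ∀ u, s ≤ u → r u = r s → 0 < deriv r u := fun u hu hu_eq => by
    have hrM : M u < r u := hu_eq ▸ (hM_anti u hu).trans_lt hrs
    have := mul_lt_mul_of_pos_left hrM (by positivity : 0 < κ * exp (-(L u) / 2))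
    linarith [hr' u (hs.trans hu), hdrift u]
  have hr_ge : ∀ t, s ≤ t → r s ≤ r t := fun t ht =>
    le_of_deriv_pos_of_eq (fun u hu => hrdiff u (hs.trans hu)) hderiv_pos ht
  have hrs_nonpos : r s ≤ 0 :=
    ge_of_tendsto hrlim ((eventually_ge_atTop s).mono hr_ge)
  have : 0 ≤ M s := by positivity
  linarith

theorem trapping_bound_general (β κ K t₀ : ℝ) (hβ : 0 < β) (hκ : 0 < κ) (hK : 0 < K)
    (L r g : ℝ → ℝ)
    (hrdiff : ∀ t, t₀ ≤ t → DifferentiableAt ℝ r t)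
    (hLmono : StrictMonoOn L (Set.Ici t₀))
    (hr' : ∀ t, t₀ ≤ t → deriv r t = κ * Real.exp (-(L t) / 2) * r t + g t)
    (hg : ∀ t, t₀ ≤ t → |g t| ≤ K * Real.exp (-((1 + β) * L t)))
    (hrlim : Tendsto r atTop (nhds 0)) :
    ∃ C : ℝ, 0 < C ∧ ∃ t₁ : ℝ, t₀ ≤ t₁ ∧ ∀ t, t₁ ≤ t →
      |r t| ≤ C * Real.exp (-((1 / 2 + β) * L t)) := by
  have hβ' : 0 ≤ 1 / 2 + β := by positivity
  have hupper := le_of_deriv_ge_of_tendsto_zero hβ' hκ hK.le hrdiff hLmono.monotoneOn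
    (fun t ht => by linarith [hr' t ht, (abs_le.mp (hg t ht)).1]) hrlim
  have hlower := le_of_deriv_ge_of_tendsto_zero (r := -r) hβ' hκ hK.le
    (fun t ht => (hrdiff t ht).neg) hLmono.monotoneOn
    (fun t ht => by rw [deriv.neg, Pi.neg_apply]; linarith [hr' t ht, (abs_le.mp (hg t ht)).2])
    (by rw [← neg_zero]; exact hrlim.neg)
  exact ⟨K / κ, div_pos hK hκ, t₀, le_rfl, fun t ht =>
    abs_le.mpr ⟨neg_le.mp (hlower t ht), hupper t ht⟩⟩

/-- Trapping argument: if `L` is strictly increasing with `L(t) → ∞`,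
`r' = κ e^{-L/2} r + g` with `|g| ≤ K e^{-(1+β)L}` and `r(t) → 0`, then
`|r t| ≤ C e^{-(1/2+β) L t}` for large `t`. -/
theorem trapping_bound (β κ K t₀ : ℝ) (hβ : 0 < β) (hκ : 0 < κ) (hK : 0 < K)
    (L r g : ℝ → ℝ)
    (hLdiff : ∀ t, t₀ ≤ t → DifferentiableAt ℝ L t)
    (hrdiff : ∀ t, t₀ ≤ t → DifferentiableAt ℝ r t)
    (hLmono : StrictMonoOn L (Set.Ici t₀))
    (hLlim : Tendsto L atTop atTop)
    (hr' : ∀ t, t₀ ≤ t → deriv r t = κ * Real.exp (-(L t) / 2) * r t + g t)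
    (hg : ∀ t, t₀ ≤ t → |g t| ≤ K * Real.exp (-((1 + β) * L t)))
    (hrlim : Tendsto r atTop (nhds 0)) :
    ∃ C : ℝ, 0 < C ∧ ∃ t₁ : ℝ, t₀ ≤ t₁ ∧ ∀ t, t₁ ≤ t →
      |r t| ≤ C * Real.exp (-((1 / 2 + β) * L t)) :=
  trapping_bound_general β κ K t₀ hβ hκ hK L r g hrdiff hLmono hr' hg hrlim
end

section
/- No two-soliton separation with repulsive interaction at rate slower than allowed: Let β ∈ (0, 1/2), c₀ > 0, and let L, v : [t₀,∞) → ℝ be C¹ with L(t) → ∞, v(t) → 0, |L'(t) - v(t)| ≤ e^{-(1/2+β)L(t)} and v(t) ≤ -c₀ ∫ₜ^∞ e^{-L(s)} ds for all large t (with the integral finite). Then letting l := limsup_{t→∞} L(t)/log t, one has both l ≤ 1/(1/2+β) and, for every ε ∈ (0,l), l + ε - 1 ≥ (1/2+β)(l - ε); these are contradictory for small ε, so no such pair (L, v) exists. -/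
/-!
Put `F = e^{bL}`. The bound on `L'` gives `F' ≤ b (v F + 1)`, and `v ≤ 0`, so `F` grows at most
linearly. A growth bound `F ≲ t^r` means `e^{-L} ≳ t^{-r/b}`, so integrability of `e^{-L}` forces
`r > b`; the tail integral then gives `v ≲ -t^{1-r/b}`, which pushes `F` below a barrier of order
`t^{r/b-1}`. For `b > 1/2` each step lowers an exponent `r ≤ 1` by at least `2 - 1/b`, so after
finitely many steps `r > b` fails.
-/

open Filter MeasureTheory Real Set

lemma eventually_forall_ge_sub_le_mul_sub_of_deriv_le {f : ℝ → ℝ} {k : ℝ}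
    (hf : ∀ᶠ t in atTop, DifferentiableAt ℝ f t) (hk : ∀ᶠ t in atTop, deriv f t ≤ k) :
    ∀ᶠ T in atTop, ∀ t, T ≤ t → f t - f T ≤ k * (t - T) := by
  obtain ⟨T₀, hT₀⟩ := eventually_atTop.1 (hf.and hk)
  filter_upwards [eventually_ge_atTop T₀] with T hT t ht
  have hD : ∀ x ∈ Ici T, DifferentiableAt ℝ f x := fun x hx => (hT₀ x (hT.trans hx)).1
  refine (convex_Ici T).image_sub_le_mul_sub_of_deriv_le
    (fun x hx => (hD x hx).continuousAt.continuousWithinAt) ?_ ?_ T self_mem_Ici t ht ht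
  · rw [interior_Ici]
    exact fun x hx => (hD x (Ioi_subset_Ici_self hx)).differentiableWithinAt
  · rw [interior_Ici]
    exact fun x hx => (hT₀ x (hT.trans hx.le)).2

lemma exists_pos_eventually_le_mul_of_deriv_le {f : ℝ → ℝ} {k : ℝ}
    (hf : ∀ᶠ t in atTop, DifferentiableAt ℝ f t) (hk : ∀ᶠ t in atTop, deriv f t ≤ k) :
    ∃ C > 0, ∀ᶠ t in atTop, f t ≤ C * t := by
  obtain ⟨T, hT, hT₁⟩ :=
    ((eventually_forall_ge_sub_le_mul_sub_of_deriv_le hf hk).and (eventually_ge_atTop 1)).exists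
  refine ⟨|f T| + |k| + 1, by positivity, ?_⟩
  filter_upwards [eventually_ge_atTop T] with t ht
  have hfT : f T ≤ |f T| * t := by nlinarith [le_abs_self (f T), abs_nonneg (f T)]
  have hkt : k * (t - T) ≤ |k| * t := by nlinarith [le_abs_self k, abs_nonneg k]
  nlinarith [hT t ht]

/-- A fence argument: `f` cannot stay above `B`, since it would decrease at rate `b` and
become negative; once below the nondecreasing `B`, it can never cross it again. -/
lemma eventually_le_of_deriv_le_neg {f B B' : ℝ → ℝ} {b : ℝ} (hb : 0 < b)
    (hf : ∀ᶠ t in atTop, DifferentiableAt ℝ f t) (hf₀ : ∀ᶠ t in atTop, 0 ≤ f t)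
    (hB : ∀ᶠ t in atTop, HasDerivAt B (B' t) t ∧ 0 ≤ B' t)
    (hfB : ∀ᶠ t in atTop, B t ≤ f t → deriv f t ≤ -b) :
    ∀ᶠ t in atTop, f t ≤ B t := by
  have hcross : ∃ᶠ t in atTop, f t ≤ B t := by
    intro hBf
    simp only [not_le] at hBf
    have hk : ∀ᶠ t in atTop, deriv f t ≤ -b := by
      filter_upwards [hBf, hfB] with t hlt hle using hle hlt.le
    obtain ⟨T, hT, hfT⟩ :=
      ((eventually_forall_ge_sub_le_mul_sub_of_deriv_le hf hk).and hf₀).exists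
    obtain ⟨t, ht, hft⟩ := ((eventually_ge_atTop (T + (f T + 1) / b)).and hf₀).exists
    have hlong : f T + 1 ≤ (t - T) * b := (div_le_iff₀ hb).1 (by linarith)
    linarith [hT t (by linarith [div_nonneg (by linarith : 0 ≤ f T + 1) hb.le])]
  obtain ⟨T₀, hT₀⟩ := eventually_atTop.1 (hf.and (hB.and hfB))
  obtain ⟨T, hfBT, hT⟩ := (hcross.and_eventually (eventually_ge_atTop T₀)).exists
  filter_upwards [eventually_ge_atTop T] with t ht
  have hIcc : ∀ x ∈ Icc T t, _ := fun x hx => hT₀ x (hT.trans hx.1)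
  refine image_le_of_deriv_right_lt_deriv_boundary' (f' := deriv f)
    (fun x hx => (hIcc x hx).1.continuousAt.continuousWithinAt)
    (fun x hx => (hIcc x (Ico_subset_Icc_self hx)).1.hasDerivAt.hasDerivWithinAt) hfBT
    (fun x hx => (hIcc x hx).2.1.1.continuousAt.continuousWithinAt)
    (fun x hx => (hIcc x (Ico_subset_Icc_self hx)).2.1.1.hasDerivWithinAt) ?_ (right_mem_Icc.2 ht)
  intro x hx hfx
  have hxT := hIcc x (Ico_subset_Icc_self hx)
  linarith [hxT.2.2 hfx.ge, hxT.2.1.2]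

lemma one_lt_of_integrableAtFilter_of_mul_rpow_le {g : ℝ → ℝ} {c p : ℝ} (hc : 0 < c)
    (hg : IntegrableAtFilter g atTop) (h : ∀ᶠ t in atTop, c * t ^ (-p) ≤ g t) : 1 < p := by
  obtain ⟨s, hs, hgs⟩ := hg
  obtain ⟨T, hT⟩ := eventually_atTop.1
    ((show ∀ᶠ t in atTop, t ∈ s from hs).and (h.and (eventually_gt_atTop 0)))
  have hrpow : IntegrableOn (fun t => t ^ (-p)) (Ioi T) := by
    refine ((hgs.mono_set fun t ht => (hT t (le_of_lt ht)).1).const_mul c⁻¹).mono'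
      (measurable_id.pow_const _).aestronglyMeasurable
      (ae_restrict_of_forall_mem measurableSet_Ioi fun t ht => ?_)
    have hTt := hT t (le_of_lt ht)
    rw [norm_of_nonneg (rpow_nonneg hTt.2.2.le _)]
    exact (le_inv_mul_iff₀ hc).2 hTt.2.1
  linarith [(integrableOn_Ioi_rpow_iff (hT T le_rfl).2.2).1 hrpow]

lemma eventually_mul_rpow_le_setIntegral_Ioi {g : ℝ → ℝ} {c p : ℝ} (hp : 1 < p)
    (hg : IntegrableAtFilter g atTop) (h : ∀ᶠ t in atTop, c * t ^ (-p) ≤ g t) :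
    ∀ᶠ t in atTop, c / (p - 1) * t ^ (1 - p) ≤ ∫ s in Ioi t, g s := by
  obtain ⟨s, hs, hgs⟩ := hg
  obtain ⟨T, hT⟩ := eventually_atTop.1 ((show ∀ᶠ t in atTop, t ∈ s from hs).and h)
  filter_upwards [eventually_ge_atTop T, eventually_gt_atTop 0] with t ht ht₀
  have hTx : ∀ x ∈ Ioi t, x ∈ s ∧ c * x ^ (-p) ≤ g x := fun x hx => hT x (ht.trans hx.le)
  calc c / (p - 1) * t ^ (1 - p) = ∫ x in Ioi t, c * x ^ (-p) := by
        rw [integral_const_mul, integral_Ioi_rpow_of_lt (by linarith) ht₀,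
          show -p + 1 = 1 - p by ring]
        field_simp [show p - 1 ≠ 0 by linarith, show 1 - p ≠ 0 by linarith]
        ring
    _ ≤ ∫ x in Ioi t, g x :=
        setIntegral_mono_on ((integrableOn_Ioi_rpow_of_lt (by linarith) ht₀).const_mul c)
          (hgs.mono_set fun x hx => (hTx x hx).1) measurableSet_Ioi fun x hx => (hTx x hx).2

lemma exists_mul_rpow_le_exp_neg {L : ℝ → ℝ} {b r : ℝ} (hb : 0 < b)
    (hgrowth : ∃ C > 0, ∀ᶠ t in atTop, exp (b * L t) ≤ C * t ^ r) :
    ∃ c > 0, ∀ᶠ t in atTop, c * t ^ (-(r / b)) ≤ exp (-L t) := by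
  obtain ⟨C, hC, hle⟩ := hgrowth
  refine ⟨C ^ (-b⁻¹), rpow_pos_of_pos hC _, ?_⟩
  filter_upwards [hle, eventually_gt_atTop 0] with t hLt ht
  have hexp : exp (-L t) = exp (b * L t) ^ (-b⁻¹) := by
    rw [← exp_mul]
    field_simp
  calc C ^ (-b⁻¹) * t ^ (-(r / b)) = (C * t ^ r) ^ (-b⁻¹) := by
        rw [mul_rpow hC.le (rpow_nonneg ht.le _), ← rpow_mul ht.le]
        ring_nf
    _ ≤ exp (-L t) := by
        rw [hexp]
        exact rpow_le_rpow_of_nonpos (exp_pos _) hLt (by simp [hb.le])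

lemma lt_of_exp_mul_le_rpow {L : ℝ → ℝ} {b r : ℝ} (hb : 0 < b)
    (hint : IntegrableAtFilter (fun s => exp (-L s)) atTop)
    (hgrowth : ∃ C > 0, ∀ᶠ t in atTop, exp (b * L t) ≤ C * t ^ r) : b < r := by
  obtain ⟨c, hc, hle⟩ := exists_mul_rpow_le_exp_neg hb hgrowth
  exact (one_lt_div hb).1 (one_lt_of_integrableAtFilter_of_mul_rpow_le hc hint hle)

/-- The reduced dynamics of a two-soliton configuration with repulsive interaction: `L` is the
distance between the solitons and `v` their relative velocity, both for large times. -/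
structure RepulsiveSeparation (b c₀ : ℝ) (L v : ℝ → ℝ) : Prop where
  differentiableAt : ∀ᶠ t in atTop, DifferentiableAt ℝ L t
  deriv_le : ∀ᶠ t in atTop, deriv L t ≤ v t + exp (-(b * L t))
  le_neg_mul_integral : ∀ᶠ t in atTop, v t ≤ -c₀ * ∫ s in Ioi t, exp (-L s)
  integrableAtFilter : IntegrableAtFilter (fun s => exp (-L s)) atTop

namespace RepulsiveSeparation

variable {b c₀ r : ℝ} {L v : ℝ → ℝ}

lemma deriv_exp_mul_le (h : RepulsiveSeparation b c₀ L v) (hb : 0 ≤ b) :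
    ∀ᶠ t in atTop, deriv (fun t => exp (b * L t)) t ≤ b * (v t * exp (b * L t) + 1) := by
  filter_upwards [h.differentiableAt, h.deriv_le] with t hd hle
  rw [(hd.hasDerivAt.const_mul b).exp.deriv]
  have hinv : exp (b * L t) * exp (-(b * L t)) = 1 := by rw [← exp_add]; simp
  calc exp (b * L t) * (b * deriv L t) ≤ exp (b * L t) * (b * (v t + exp (-(b * L t)))) := by
        gcongr
    _ = b * (v t * exp (b * L t) + 1) := by rw [← hinv]; ring

lemma eventually_v_nonpos (h : RepulsiveSeparation b c₀ L v) (hc₀ : 0 ≤ c₀) :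
    ∀ᶠ t in atTop, v t ≤ 0 := by
  filter_upwards [h.le_neg_mul_integral] with t ht
  have : 0 ≤ ∫ s in Ioi t, exp (-L s) :=
    setIntegral_nonneg measurableSet_Ioi fun s _ => (exp_pos (-L s)).le
  nlinarith

lemma exists_exp_mul_le_mul (h : RepulsiveSeparation b c₀ L v) (hb : 0 ≤ b) (hc₀ : 0 ≤ c₀) :
    ∃ C > 0, ∀ᶠ t in atTop, exp (b * L t) ≤ C * t := by
  refine exists_pos_eventually_le_mul_of_deriv_le (k := b) ?_ ?_
  · filter_upwards [h.differentiableAt] with t hd using (hd.const_mul b).exp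
  · filter_upwards [h.deriv_exp_mul_le hb, h.eventually_v_nonpos hc₀] with t hF hv
    have : v t * exp (b * L t) ≤ 0 := mul_nonpos_of_nonpos_of_nonneg hv (exp_pos _).le
    nlinarith

/-- With `e^{-L} ≳ t^{-p}`, the tail integral forces `v ≲ -c₁ t^{1-p}`, and then
`(e^{bL})' ≤ b (v e^{bL} + 1)` keeps `e^{bL}` below the barrier `(2 / c₁) t^{p-1}`. -/
lemma exp_mul_le_rpow_div_sub_one (h : RepulsiveSeparation b c₀ L v) (hb : 0 < b)
    (hc₀ : 0 < c₀) (hgrowth : ∃ C > 0, ∀ᶠ t in atTop, exp (b * L t) ≤ C * t ^ r) (hbr : b < r) :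
    ∃ C > 0, ∀ᶠ t in atTop, exp (b * L t) ≤ C * t ^ (r / b - 1) := by
  set p := r / b
  have hp : 1 < p := (one_lt_div hb).2 hbr
  obtain ⟨c, hc, hle⟩ := exists_mul_rpow_le_exp_neg hb hgrowth
  set c₁ := c₀ * (c / (p - 1))
  have hc₁ : 0 < c₁ := mul_pos hc₀ (div_pos hc (sub_pos.2 hp))
  have hv : ∀ᶠ t in atTop, v t ≤ -(c₁ * t ^ (1 - p)) := by
    filter_upwards [h.le_neg_mul_integral,
      eventually_mul_rpow_le_setIntegral_Ioi hp h.integrableAtFilter hle] with t hvt hI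
    nlinarith
  refine ⟨2 / c₁, by positivity, eventually_le_of_deriv_le_neg (B := fun t => 2 / c₁ * t ^ (p - 1))
    (B' := fun t => 2 / c₁ * ((p - 1) * t ^ (p - 1 - 1))) hb ?_ ?_ ?_ ?_⟩
  · filter_upwards [h.differentiableAt] with t hd using (hd.const_mul b).exp
  · exact Eventually.of_forall fun t => (exp_pos _).le
  · filter_upwards [eventually_gt_atTop 0] with t ht
    refine ⟨(hasDerivAt_rpow_const (Or.inl ht.ne')).const_mul _, ?_⟩
    have := sub_pos.2 hp
    positivity
  · filter_upwards [h.deriv_exp_mul_le hb.le, hv, eventually_gt_atTop 0] with t hF hvt ht hBF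
    have hinv : t ^ (1 - p) * t ^ (p - 1) = 1 := by rw [← rpow_add ht]; simp
    have hkey : 2 ≤ c₁ * t ^ (1 - p) * exp (b * L t) :=
      calc 2 = 2 / c₁ * c₁ * (t ^ (1 - p) * t ^ (p - 1)) := by
            rw [hinv, div_mul_cancel₀ _ hc₁.ne', mul_one]
        _ = c₁ * t ^ (1 - p) * (2 / c₁ * t ^ (p - 1)) := by ring
        _ ≤ c₁ * t ^ (1 - p) * exp (b * L t) := by gcongr
    have hvF : v t * exp (b * L t) + 1 ≤ -1 := by
      nlinarith [mul_le_mul_of_nonneg_right hvt (exp_pos (b * L t)).le]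
    nlinarith [mul_le_mul_of_nonneg_left hvF hb.le]

lemma exists_exp_mul_le_rpow_of_nat (h : RepulsiveSeparation b c₀ L v) (hb : 1 / 2 < b)
    (hc₀ : 0 < c₀) (n : ℕ) :
    ∃ r ≤ 1 - n * (2 - b⁻¹), ∃ C > 0, ∀ᶠ t in atTop, exp (b * L t) ≤ C * t ^ r := by
  have hb₀ : 0 < b := by linarith
  have hgap : 0 < 2 - b⁻¹ := sub_pos.2 ((inv_lt_comm₀ hb₀ two_pos).2 (by linarith))
  induction n with
  | zero =>
    obtain ⟨C, hC, hle⟩ := h.exists_exp_mul_le_mul hb₀.le hc₀.le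
    exact ⟨1, by simp, C, hC, by simpa using hle⟩
  | succ n ih =>
    obtain ⟨r, hr, hgrowth⟩ := ih
    have hbr := lt_of_exp_mul_le_rpow hb₀ h.integrableAtFilter hgrowth
    refine ⟨r / b - 1, ?_, h.exp_mul_le_rpow_div_sub_one hb₀ hc₀ hgrowth hbr⟩
    have hr₁ : r ≤ 1 := by nlinarith [(Nat.cast_nonneg n : (0 : ℝ) ≤ n)]
    have hq : 1 ≤ b⁻¹ := by rw [le_inv_comm₀ one_pos hb₀]; simpa using hbr.le.trans hr₁
    rw [div_eq_mul_inv]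
    push_cast
    nlinarith [mul_nonneg (sub_nonneg.2 hr₁) (sub_nonneg.2 hq)]

end RepulsiveSeparation

theorem not_repulsiveSeparation {b c₀ : ℝ} {L v : ℝ → ℝ} (hb : 1 / 2 < b) (hc₀ : 0 < c₀) :
    ¬ RepulsiveSeparation b c₀ L v := by
  intro h
  have hb₀ : 0 < b := by linarith
  obtain ⟨n, hn⟩ := exists_nat_ge (2 - b⁻¹)⁻¹
  obtain ⟨r, hr, hgrowth⟩ := h.exists_exp_mul_le_rpow_of_nat hb hc₀ n
  have hbr := lt_of_exp_mul_le_rpow hb₀ h.integrableAtFilter hgrowth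
  have hgap : 0 < 2 - b⁻¹ := sub_pos.2 ((inv_lt_comm₀ hb₀ two_pos).2 (by linarith))
  have : 1 ≤ n * (2 - b⁻¹) := by rwa [inv_le_iff_one_le_mul₀ hgap] at hn
  linarith

theorem no_repulsive_separation_general (β c₀ t₀ : ℝ) (hβ0 : 0 < β) (hc₀ : 0 < c₀)
    (L v : ℝ → ℝ)
    (hLdiff : ∀ t, t₀ ≤ t → DifferentiableAt ℝ L t)
    (hint : IntegrableOn (fun s => Real.exp (-(L s))) (Set.Ici t₀))
    (hbounds : ∃ T : ℝ, t₀ ≤ T ∧ ∀ t, T ≤ t →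
      |deriv L t - v t| ≤ Real.exp (-((1 / 2 + β) * L t)) ∧
      v t ≤ -c₀ * ∫ s in Set.Ioi t, Real.exp (-(L s))) :
    False := by
  obtain ⟨T, -, hT⟩ := hbounds
  refine not_repulsiveSeparation (b := 1 / 2 + β) (by linarith) hc₀
    ⟨eventually_atTop.2 ⟨t₀, hLdiff⟩, eventually_atTop.2 ⟨T, fun t ht => ?_⟩,
      eventually_atTop.2 ⟨T, fun t ht => (hT t ht).2⟩, ⟨Ici t₀, Ici_mem_atTop t₀, hint⟩⟩
  linarith [(abs_le.1 (hT t ht).1).2]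

/-- No two-soliton separation with repulsive interaction at rate slower than allowed:
there is no pair `(L, v)` of C¹ functions on `[t₀, ∞)` with `L(t) → ∞`, `v(t) → 0`,
`|L' - v| ≤ e^{-(1/2+β)L}` and `v(t) ≤ -c₀ ∫ₜ^∞ e^{-L(s)} ds` for all large `t`. -/
theorem no_repulsive_separation (β c₀ t₀ : ℝ) (hβ0 : 0 < β) (hβ : β < 1 / 2) (hc₀ : 0 < c₀)
    (L v : ℝ → ℝ)
    (hLdiff : ∀ t, t₀ ≤ t → DifferentiableAt ℝ L t)
    (hvdiff : ∀ t, t₀ ≤ t → DifferentiableAt ℝ v t)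
    (hLlim : Tendsto L atTop atTop)
    (hvlim : Tendsto v atTop (nhds 0))
    (hint : IntegrableOn (fun s => Real.exp (-(L s))) (Set.Ici t₀))
    (hbounds : ∃ T : ℝ, t₀ ≤ T ∧ ∀ t, T ≤ t →
      |deriv L t - v t| ≤ Real.exp (-((1 / 2 + β) * L t)) ∧
      v t ≤ -c₀ * ∫ s in Set.Ioi t, Real.exp (-(L s))) :
    False :=
  no_repulsive_separation_general β c₀ t₀ hβ0 hc₀ L v hLdiff hint hbounds
end
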